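/- arXiv:math/9809212 — 5 statements merged into one kernel-verified Lean document; each statement's English description precedes it below -/
import Mathlib

section
/- Let O be a discrete valuation ring with uniformizer λ and finite residue field, and let M₁, M₂ be finite O-modules. Then M₁[λ^n] ≅ M₂[λ^n] as O-modules if and only if |M₁[λ^r]| = |M₂[λ^r]| for all 1 ≤ r ≤ n. -/
/-!
By the structure theorem over a PID, `M[π^n] ≅ ∏ᵢ O ⧸ (π^eᵢ)` with all `eᵢ ≤ n`, and then
`|M[π^r]| = q ^ ∑ᵢ min eᵢ r` for `r ≤ n`, where `q = |O ⧸ (π)| ≥ 2`. So the cardinalities for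
`r ≤ n` determine these sums, their successive differences `#{i | r < eᵢ}` determine the number
of `eᵢ` equal to each `m ≥ 1`, and these numbers determine the product up to isomorphism.
-/

open Submodule

namespace Submodule

variable {R M N : Type*} [CommRing R] [AddCommGroup M] [Module R M] [AddCommGroup N] [Module R N]

theorem map_torsionBy_linearEquiv (g : M ≃ₗ[R] N) (a : R) :
    (torsionBy R M a).map (g : M →ₗ[R] N) = torsionBy R N a := by
  ext y
  simp [map_equiv_eq_comap_symm, mem_torsionBy_iff, ← map_smul]

def torsionByCongr (g : M ≃ₗ[R] N) (a : R) :
    torsionBy R M a ≃ₗ[R] torsionBy R N a :=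
  g.ofSubmodules _ _ (map_torsionBy_linearEquiv g a)

theorem comap_subtype_torsionBy (P : Submodule R M) (a : R) :
    (torsionBy R M a).comap P.subtype = torsionBy R P a := by
  ext x
  simp [mem_torsionBy_iff, ← coe_eq_zero]

def torsionByTorsionByEquivOfDvd {a b : R} (h : a ∣ b) :
    torsionBy R (torsionBy R M b) a ≃ₗ[R] torsionBy R M a :=
  (LinearEquiv.ofEq _ _ (comap_subtype_torsionBy _ a).symm).trans
    (comapSubtypeEquivOfLe (torsionBy_le_torsionBy_of_dvd a b h))

def torsionByPiEquiv {ι : Type*} (Q : ι → Type*) [∀ i, AddCommGroup (Q i)] [∀ i, Module R (Q i)]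
    (a : R) : torsionBy R (∀ i, Q i) a ≃ₗ[R] ∀ i, torsionBy R (Q i) a where
  toFun x i := ⟨x.1 i, congrFun ((mem_torsionBy_iff _ _).mp x.2) i⟩
  invFun y := ⟨fun i => y i, funext fun i => (y i).2⟩
  map_add' _ _ := rfl
  map_smul' _ _ := rfl
  left_inv _ := rfl
  right_inv _ := rfl

end Submodule

section PowQuotient

variable {R : Type*} [CommRing R] [IsDomain R] {ϖ : R}

theorem mk_mem_torsionBy_pow_iff (hϖ : ϖ ≠ 0) (e r : ℕ) (a : R) :
    (Submodule.Quotient.mk a : R ⧸ Ideal.span {ϖ ^ e}) ∈ torsionBy R _ (ϖ ^ r) ↔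
      ϖ ^ (e - min e r) ∣ a := by
  obtain ⟨m, k, j, hkj, rfl, rfl⟩ : ∃ m k j, (k = 0 ∨ j = 0) ∧ e = m + k ∧ r = m + j :=
    ⟨min e r, e - min e r, r - min e r, by omega, by omega, by omega⟩
  rw [mem_torsionBy_iff, ← Quotient.mk_smul, Quotient.mk_eq_zero, Ideal.mem_span_singleton,
    smul_eq_mul, pow_add, pow_add, mul_assoc, mul_dvd_mul_iff_left (pow_ne_zero _ hϖ)]
  rcases hkj with rfl | rfl <;> simp

theorem mk_pow_mul_eq_zero_iff (hϖ : ϖ ≠ 0) {k m e : ℕ} (he : k + m = e) (a : R) :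
    (Submodule.Quotient.mk (ϖ ^ k * a) : R ⧸ Ideal.span {ϖ ^ e}) = 0 ↔ ϖ ^ m ∣ a := by
  rw [← he, Quotient.mk_eq_zero, Ideal.mem_span_singleton, pow_add,
    mul_dvd_mul_iff_left (pow_ne_zero _ hϖ)]

noncomputable def torsionByPowQuotEquiv (hϖ : ϖ ≠ 0) (e r : ℕ) :
    (R ⧸ Ideal.span {ϖ ^ min e r}) ≃ₗ[R] torsionBy R (R ⧸ Ideal.span {ϖ ^ e}) (ϖ ^ r) := by
  set k := e - min e r
  -- multiplication by `ϖ ^ k` maps `R` onto the `ϖ ^ r`-torsion, with kernel `(ϖ ^ min e r)`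
  let φ : R →ₗ[R] torsionBy R (R ⧸ Ideal.span {ϖ ^ e}) (ϖ ^ r) :=
    LinearMap.codRestrict _ ((mkQ _).comp (LinearMap.mulLeft R (ϖ ^ k))) fun a =>
      (mk_mem_torsionBy_pow_iff hϖ e r _).mpr (dvd_mul_right _ a)
  have hφ : Function.Surjective φ := by
    rintro ⟨y, hy⟩
    obtain ⟨a, rfl⟩ := Submodule.Quotient.mk_surjective _ y
    obtain ⟨b, rfl⟩ := (mk_mem_torsionBy_pow_iff hϖ e r a).mp hy
    exact ⟨b, rfl⟩
  have hker : Ideal.span {ϖ ^ min e r} = LinearMap.ker φ := by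
    ext a
    rw [Ideal.mem_span_singleton, LinearMap.mem_ker, ← Subtype.coe_inj]
    exact (mk_pow_mul_eq_zero_iff hϖ (by omega) a).symm
  exact (quotEquivOfEq _ _ hker).trans (φ.quotKerEquivOfSurjective hφ)

theorem natCard_quot_pow (hϖ : ϖ ≠ 0) (m : ℕ) :
    Nat.card (R ⧸ Ideal.span {ϖ ^ m}) = Nat.card (R ⧸ Ideal.span {ϖ}) ^ m := by
  induction m with
  | zero => simp [Ideal.span_singleton_one]
  | succ m ih =>
    have hle : Ideal.span {ϖ ^ (m + 1)} ≤ Ideal.span {ϖ} :=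
      Ideal.span_singleton_le_span_singleton.mpr (dvd_pow_self ϖ m.succ_ne_zero)
    have hker : LinearMap.ker (factor hle) = torsionBy R _ (ϖ ^ m) := by
      ext x
      obtain ⟨a, rfl⟩ := Submodule.Quotient.mk_surjective _ x
      rw [LinearMap.mem_ker, mk_mem_torsionBy_pow_iff hϖ, min_eq_right m.le_succ,
        Nat.add_sub_cancel_left, pow_one]
      exact Quotient.mk_eq_zero _ |>.trans Ideal.mem_span_singleton
    rw [card_eq_card_quotient_mul_card (LinearMap.ker (factor hle)),
      Nat.card_congr ((factor hle).quotKerEquivOfSurjective (factor_surjective hle)).toEquiv,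
      hker, ← Nat.card_congr (torsionByPowQuotEquiv hϖ (m + 1) m).toEquiv, min_eq_right m.le_succ,
      ih, pow_succ]

theorem natCard_torsionBy_pi_quot_pow (hϖ : ϖ ≠ 0) {ι : Type*} [Fintype ι] (e : ι → ℕ)
    (r : ℕ) :
    Nat.card (torsionBy R (∀ i, R ⧸ Ideal.span {ϖ ^ e i}) (ϖ ^ r)) =
      Nat.card (R ⧸ Ideal.span {ϖ}) ^ ∑ i, min (e i) r := by
  rw [Nat.card_congr (torsionByPiEquiv _ _).toEquiv, Nat.card_pi, ← Finset.prod_pow_eq_pow_sum]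
  refine Finset.prod_congr rfl fun i _ => ?_
  rw [← Nat.card_congr (torsionByPowQuotEquiv hϖ (e i) r).toEquiv, natCard_quot_pow hϖ]

theorem natCard_torsionBy_pow_of_equiv_pi_quot (hϖ : ϖ ≠ 0) {M : Type*} [AddCommGroup M]
    [Module R M] {ι : Type*} [Fintype ι] {e : ι → ℕ} {n r : ℕ}
    (g : torsionBy R M (ϖ ^ n) ≃ₗ[R] ∀ i, R ⧸ Ideal.span {ϖ ^ e i}) (hr : r ≤ n) :
    Nat.card (torsionBy R M (ϖ ^ r)) = Nat.card (R ⧸ Ideal.span {ϖ}) ^ ∑ i, min (e i) r := by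
  rw [← natCard_torsionBy_pi_quot_pow hϖ e r]
  exact Nat.card_congr
    ((torsionByTorsionByEquivOfDvd (pow_dvd_pow ϖ hr)).symm ≪≫ₗ torsionByCongr g _).toEquiv

end PowQuotient

section Counting

open Finset

variable {ι κ : Type*} [Fintype ι] [Fintype κ]

theorem sum_min_succ (g : ι → ℕ) (r : ℕ) :
    ∑ i, min (g i) (r + 1) = ∑ i, min (g i) r + #{i | r < g i} := by
  rw [card_filter, ← sum_add_distrib]
  exact sum_congr rfl fun i _ => by split_ifs <;> omega

theorem card_filter_lt_eq_card_fiber_succ_add (g : ι → ℕ) (k : ℕ) :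
    #{i | k < g i} = #{i | g i = k + 1} + #{i | k + 1 < g i} := by
  rw [card_filter, card_filter, card_filter, ← sum_add_distrib]
  exact sum_congr rfl fun i _ => by split_ifs <;> omega

theorem card_fiber_succ_eq_of_sum_min_eq {e : ι → ℕ} {f : κ → ℕ} {n : ℕ}
    (he : ∀ i, e i ≤ n) (hf : ∀ j, f j ≤ n)
    (h : ∀ r ≤ n, ∑ i, min (e i) r = ∑ j, min (f j) r) (k : ℕ) :
    Fintype.card {i // e i = k + 1} = Fintype.card {j // f j = k + 1} := by
  have hlt : ∀ s, #{i | s < e i} = #{j | s < f j} := by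
    intro s
    by_cases hs : s < n
    · have := sum_min_succ e s
      have := sum_min_succ f s
      have := h s hs.le
      have := h (s + 1) hs
      omega
    · rw [filter_false_of_mem fun i _ => by have := he i; omega,
        filter_false_of_mem fun j _ => by have := hf j; omega]
      rfl
  rw [Fintype.card_subtype, Fintype.card_subtype]
  have := card_filter_lt_eq_card_fiber_succ_add e k
  have := card_filter_lt_eq_card_fiber_succ_add f k
  have := hlt k
  have := hlt (k + 1)
  omega

end Counting

section PiQuotient

variable {R : Type*} [CommRing R] {ϖ : R}

def piQuotPowEquivPiFiber {ι : Type*} (e : ι → ℕ) :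
    (∀ i, R ⧸ Ideal.span {ϖ ^ e i}) ≃ₗ[R] ∀ m : ℕ, {i // e i = m} → R ⧸ Ideal.span {ϖ ^ m} :=
  (LinearEquiv.piCongrLeft' R _ (Equiv.sigmaFiberEquiv e).symm ≪≫ₗ
    LinearEquiv.piCongrRight fun s => quotEquivOfEq _ _
      (by rw [Equiv.symm_symm, Equiv.sigmaFiberEquiv_apply, s.2.2])) ≪≫ₗ
  LinearEquiv.piCurry R fun m (_ : {i // e i = m}) => R ⧸ Ideal.span {ϖ ^ m}

def piQuotPowEquivOfFiberEquiv {ι κ : Type*} (e : ι → ℕ) (f : κ → ℕ)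
    (σ : ∀ k, {i // e i = k + 1} ≃ {j // f j = k + 1}) :
    (∀ i, R ⧸ Ideal.span {ϖ ^ e i}) ≃ₗ[R] ∀ j, R ⧸ Ideal.span {ϖ ^ f j} :=
  piQuotPowEquivPiFiber e ≪≫ₗ
    LinearEquiv.piCongrRight (fun m => match m with
      | 0 =>
        have : Subsingleton (R ⧸ Ideal.span {ϖ ^ 0}) := by
          simp [Ideal.span_singleton_one]
        LinearEquiv.ofSubsingleton _ _
      | k + 1 => LinearEquiv.piCongrLeft' R _ (σ k)) ≪≫ₗ
    (piQuotPowEquivPiFiber f).symm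

end PiQuotient

section Decomposition

variable {R : Type*} [CommRing R] [IsDomain R] {ϖ : R}

theorem le_of_pow_smul_mk_one_eq_zero (hϖ : Irreducible ϖ) {e n : ℕ}
    (h : ϖ ^ n • (Submodule.Quotient.mk 1 : R ⧸ Ideal.span {ϖ ^ e}) = 0) : e ≤ n := by
  rw [← Quotient.mk_smul, smul_eq_mul, mul_one, Quotient.mk_eq_zero,
    Ideal.mem_span_singleton] at h
  exact (pow_dvd_pow_iff hϖ.ne_zero hϖ.not_isUnit).mp h

theorem exists_torsionBy_pow_equiv_pi_quot [IsPrincipalIdealRing R] (hϖ : Irreducible ϖ)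
    (M : Type*) [AddCommGroup M] [Module R M] [Module.Finite R M] (n : ℕ) :
    ∃ (d : ℕ) (e : Fin d → ℕ), (∀ i, e i ≤ n) ∧
      Nonempty (torsionBy R M (ϖ ^ n) ≃ₗ[R] ∀ i, R ⧸ Ideal.span {ϖ ^ e i}) := by
  have hT : Module.IsTorsion' (torsionBy R M (ϖ ^ n)) (Submonoid.powers ϖ) :=
    fun x => ⟨⟨ϖ ^ n, n, rfl⟩, smul_torsionBy _ x⟩
  obtain ⟨d, e, ⟨g⟩⟩ := Module.torsion_by_prime_power_decomposition hϖ hT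
  let g' := g ≪≫ₗ DirectSum.linearEquivFunOnFintype R _ _
  have h : ϖ ^ n • (fun _ => Submodule.Quotient.mk 1 : ∀ i, R ⧸ Ideal.span {ϖ ^ e i}) = 0 := by
    rw [← g'.apply_symm_apply (fun _ => _), ← map_smul, smul_torsionBy, map_zero]
  exact ⟨d, e, fun i => le_of_pow_smul_mk_one_eq_zero hϖ (congrFun h i), ⟨g'⟩⟩

end Decomposition

/-- For finite modules `M₁, M₂` over a DVR `O` with uniformizer `π` and
finite residue field, `M₁[π^n] ≅ M₂[π^n]` as `O`-modules iff
`|M₁[π^r]| = |M₂[π^r]|` for all `1 ≤ r ≤ n`. -/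
theorem stmt1 (O : Type*) [CommRing O] [IsDomain O] [IsDiscreteValuationRing O]
    (π : O) (hπ : Irreducible π) [Finite (O ⧸ Ideal.span {π})]
    (M₁ M₂ : Type*) [AddCommGroup M₁] [Module O M₁] [Finite M₁]
    [AddCommGroup M₂] [Module O M₂] [Finite M₂] (n : ℕ) :
    Nonempty ((Submodule.torsionBy O M₁ (π ^ n)) ≃ₗ[O] (Submodule.torsionBy O M₂ (π ^ n)))
      ↔ ∀ r, 1 ≤ r → r ≤ n →
          Nat.card (Submodule.torsionBy O M₁ (π ^ r)) =
            Nat.card (Submodule.torsionBy O M₂ (π ^ r)) := by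
  refine ⟨fun ⟨g⟩ r _ hrn => ?_, fun h => ?_⟩
  · have hdvd := pow_dvd_pow π hrn
    exact Nat.card_congr ((torsionByTorsionByEquivOfDvd hdvd).symm ≪≫ₗ torsionByCongr g _ ≪≫ₗ
      torsionByTorsionByEquivOfDvd hdvd).toEquiv
  obtain ⟨d₁, e, he, ⟨g₁⟩⟩ := exists_torsionBy_pow_equiv_pi_quot hπ M₁ n
  obtain ⟨d₂, f, hf, ⟨g₂⟩⟩ := exists_torsionBy_pow_equiv_pi_quot hπ M₂ n
  have hq : 1 < Nat.card (O ⧸ Ideal.span {π}) := Finite.one_lt_card_iff_nontrivial.mpr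
    (Ideal.Quotient.nontrivial_iff.mpr (Ideal.span_singleton_ne_top hπ.not_isUnit))
  have hsum : ∀ r ≤ n, ∑ i, min (e i) r = ∑ j, min (f j) r := by
    intro r hrn
    rcases Nat.eq_zero_or_pos r with rfl | hr
    · simp
    exact Nat.pow_right_injective hq <|
      (natCard_torsionBy_pow_of_equiv_pi_quot hπ.ne_zero g₁ hrn).symm.trans <|
        (h r hr hrn).trans (natCard_torsionBy_pow_of_equiv_pi_quot hπ.ne_zero g₂ hrn)
  exact ⟨g₁ ≪≫ₗ piQuotPowEquivOfFiberEquiv e f (fun k => Fintype.equivOfCardEq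
    (card_fiber_succ_eq_of_sum_min_eq he hf hsum k)) ≪≫ₗ g₂.symm⟩
end

section
/- Let O be a discrete valuation ring with uniformizer λ and finite residue field of cardinality q, and let M₁, M₂ be finite O-modules. If |M₁[λ^n]| = |M₂[λ^n]|, then |M₁| ≡ |M₂| modulo q^n (i.e., the λ-adic valuations of |M₁| and |M₂| agree up to n, or both cardinalities are equal). -/
/-!
If `π ^ n` does not kill `M`, some `x : M` has annihilator `(π ^ m)` with `m > n` (it is nonzero
because `O` is infinite and `M` finite), and `π ^ (m - n) • x` spans a copy of `O ⧸ (π ^ n)`,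
of order `q ^ n`, inside `M[π ^ n]`. So either `M[π ^ n] = M`, or `q ^ n` divides `|M[π ^ n]|`,
which divides `|M|`. If the common value `|M₁[π ^ n]| = |M₂[π ^ n]|` is divisible by `q ^ n`,
so are `|M₁|` and `|M₂|`; otherwise both modules are killed by `π ^ n` and have that common order.
-/

open Submodule IsDiscreteValuationRing

lemma Ideal.natCard_quotient_span_pow {R : Type*} [CommRing R] [IsDedekindDomain R]
    {π : R} (hπ : Prime π) (k : ℕ) :
    Nat.card (R ⧸ Ideal.span {π ^ k}) = Nat.card (R ⧸ Ideal.span {π}) ^ k := by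
  have : (Ideal.span {π}).IsPrime := (Ideal.span_singleton_prime hπ.ne_zero).mpr hπ
  rw [← Ideal.span_singleton_pow, ← cardQuot_apply, ← cardQuot_apply,
    cardQuot_pow_of_prime (by simpa using hπ.ne_zero)]

lemma Ideal.torsionOf_smul_of_eq_span_mul {R M : Type*} [CommRing R] [IsDomain R]
    [AddCommGroup M] [Module R M] {x : M} {a b : R} (ha : a ≠ 0)
    (hx : Ideal.torsionOf R M x = Ideal.span {a * b}) :
    Ideal.torsionOf R M (a • x) = Ideal.span {b} := by
  ext c
  rw [Ideal.mem_torsionOf_iff, smul_smul, ← Ideal.mem_torsionOf_iff, hx,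
    Ideal.mem_span_singleton, Ideal.mem_span_singleton, mul_comm c, mul_dvd_mul_iff_left ha]

lemma Submodule.natCard_torsionBy_dvd {R M : Type*} [CommRing R] [AddCommGroup M] [Module R M]
    (a : R) : Nat.card (torsionBy R M a) ∣ Nat.card M :=
  AddSubgroup.card_addSubgroup_dvd_card (torsionBy R M a).toAddSubgroup

lemma Submodule.natCard_torsionBy_of_isTorsionBy {R M : Type*} [CommRing R] [AddCommGroup M]
    [Module R M] {a : R} (h : Module.IsTorsionBy R M a) :
    Nat.card (torsionBy R M a) = Nat.card M := by
  rw [(Module.isTorsionBy_iff_torsionBy_eq_top a).mp h]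
  exact Nat.card_congr topEquiv.toEquiv

namespace IsDiscreteValuationRing

variable {O : Type*} [CommRing O] [IsDomain O] [IsDiscreteValuationRing O]
  {π : O} {M : Type*} [AddCommGroup M] [Module O M] [Finite M]

lemma exists_torsionOf_eq_span_pow (hπ : Irreducible π) {n : ℕ} {x : M} (hx : π ^ n • x ≠ 0) :
    ∃ y : M, Ideal.torsionOf O M y = Ideal.span {π ^ n} := by
  have : Infinite O := not_finite_iff_infinite.mp fun _ =>
    not_isField O (Finite.isField_of_domain O)
  have hbot : Ideal.torsionOf O M x ≠ ⊥ := fun h =>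
    not_injective_infinite_finite (LinearMap.toSpanSingleton O M x) (LinearMap.ker_eq_bot.mp h)
  obtain ⟨m, hm⟩ := ideal_eq_span_pow_irreducible hbot hπ
  have hnm : n ≤ m := by
    by_contra! hmn
    refine hx ((Ideal.mem_torsionOf_iff x _).mp ?_)
    rw [hm, Ideal.mem_span_singleton]
    exact pow_dvd_pow π hmn.le
  refine ⟨π ^ (m - n) • x, Ideal.torsionOf_smul_of_eq_span_mul (pow_ne_zero _ hπ.ne_zero) ?_⟩
  rwa [← pow_add, Nat.sub_add_cancel hnm]

lemma pow_natCard_residue_dvd_natCard_torsionBy (hπ : Irreducible π) {n : ℕ}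
    (h : ¬Module.IsTorsionBy O M (π ^ n)) :
    Nat.card (O ⧸ Ideal.span {π}) ^ n ∣ Nat.card (torsionBy O M (π ^ n)) := by
  obtain ⟨x, hx⟩ := not_forall.mp h
  obtain ⟨y, hy⟩ := exists_torsionOf_eq_span_pow hπ hx
  have hle : (O ∙ y) ≤ torsionBy O M (π ^ n) := by
    rw [span_singleton_le_iff_mem, mem_torsionBy_iff, ← Ideal.mem_torsionOf_iff, hy]
    exact Ideal.mem_span_singleton_self _
  have hcard : Nat.card (O ∙ y) = Nat.card (O ⧸ Ideal.span {π}) ^ n := by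
    rw [← Nat.card_congr (Ideal.quotTorsionOfEquivSpanSingleton O M y).toEquiv, hy,
      Ideal.natCard_quotient_span_pow hπ.prime]
  exact hcard ▸ AddSubgroup.card_dvd_of_le (H := (O ∙ y).toAddSubgroup)
    (K := (torsionBy O M (π ^ n)).toAddSubgroup) hle

end IsDiscreteValuationRing

theorem stmt2_general (O : Type*) [CommRing O] [IsDomain O] [IsDiscreteValuationRing O]
    (π : O) (hπ : Irreducible π)
    (q : ℕ) (hq : q = Nat.card (O ⧸ Ideal.span {π}))
    (M₁ M₂ : Type*) [AddCommGroup M₁] [Module O M₁] [Finite M₁]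
    [AddCommGroup M₂] [Module O M₂] [Finite M₂] (n : ℕ)
    (h : Nat.card (Submodule.torsionBy O M₁ (π ^ n)) =
          Nat.card (Submodule.torsionBy O M₂ (π ^ n))) :
    Nat.card M₁ ≡ Nat.card M₂ [MOD q ^ n] ∧
      (((∀ x : M₁, π ^ n • x = 0) ∧ (∀ x : M₂, π ^ n • x = 0) ∧ Nat.card M₁ = Nat.card M₂) ∨
        (q ^ n ∣ Nat.card M₁ ∧ q ^ n ∣ Nat.card M₂)) := by
  subst hq
  by_cases hdvd : Nat.card (O ⧸ Ideal.span {π}) ^ n ∣ Nat.card (torsionBy O M₁ (π ^ n))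
  · have hd₁ := hdvd.trans (natCard_torsionBy_dvd _)
    have hd₂ := (h ▸ hdvd).trans (natCard_torsionBy_dvd _)
    exact ⟨(Nat.modEq_zero_iff_dvd.mpr hd₁).trans (Nat.modEq_zero_iff_dvd.mpr hd₂).symm,
      .inr ⟨hd₁, hd₂⟩⟩
  · have h₁ : Module.IsTorsionBy O M₁ (π ^ n) := by
      by_contra hM
      exact hdvd (pow_natCard_residue_dvd_natCard_torsionBy hπ hM)
    have h₂ : Module.IsTorsionBy O M₂ (π ^ n) := by
      by_contra hM
      exact hdvd (h ▸ pow_natCard_residue_dvd_natCard_torsionBy hπ hM)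
    have heq : Nat.card M₁ = Nat.card M₂ := by
      rw [← natCard_torsionBy_of_isTorsionBy h₁, ← natCard_torsionBy_of_isTorsionBy h₂, h]
    exact ⟨heq ▸ .refl _, .inl ⟨h₁, h₂, heq⟩⟩

/-- If `M₁, M₂` are finite modules over a DVR `O` with uniformizer `π`
and residue field of cardinality `q`, and `|M₁[π^n]| = |M₂[π^n]|`, then
`|M₁| ≡ |M₂| (mod q^n)`: either `π^n` kills both modules and `|M₁| = |M₂|`, or
`q^n` divides both cardinalities. -/
theorem stmt2 (O : Type*) [CommRing O] [IsDomain O] [IsDiscreteValuationRing O]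
    (π : O) (hπ : Irreducible π) [Finite (O ⧸ Ideal.span {π})]
    (q : ℕ) (hq : q = Nat.card (O ⧸ Ideal.span {π}))
    (M₁ M₂ : Type*) [AddCommGroup M₁] [Module O M₁] [Finite M₁]
    [AddCommGroup M₂] [Module O M₂] [Finite M₂] (n : ℕ)
    (h : Nat.card (Submodule.torsionBy O M₁ (π ^ n)) =
          Nat.card (Submodule.torsionBy O M₂ (π ^ n))) :
    Nat.card M₁ ≡ Nat.card M₂ [MOD q ^ n] ∧
      (((∀ x : M₁, π ^ n • x = 0) ∧ (∀ x : M₂, π ^ n • x = 0) ∧ Nat.card M₁ = Nat.card M₂) ∨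
        (q ^ n ∣ Nat.card M₁ ∧ q ^ n ∣ Nat.card M₂)) :=
  stmt2_general O π hπ q hq M₁ M₂ n h
end

section
/- For a positive even integer k, the denominator of the Bernoulli quotient B_k/k (in lowest terms) equals ∏_{(p-1)|k} p^{v_p(k)+1}, the product over primes p with (p-1) dividing k. -/
/-!
Fix a prime `p` and put `S_k(n) = ∑_{i<n} i^k`. By Faulhaber's formula `S_k(p^N) / p^N → B_k`
`p`-adically. If `(p - 1) ∤ k`, pick `c` with `c^k ≢ 1 (mod p)`; multiplication by `c` permutes
the residues mod `p^N`, and raising to the `k`-th power turns a congruence mod `p^N` into one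
mod `p^(N + v_p(k))`, so `p^(N + v_p(k)) ∣ (c^k - 1) S_k(p^N)`. Hence `v_p(B_k) ≥ v_p(k)` and
`p` does not divide the denominator of `B_k / k` (Adams). If `(p - 1) ∣ k`, von Staudt–Clausen
gives `v_p(B_k) = -1`, so `p` enters the denominator of `B_k / k` with exponent `v_p(k) + 1`.
-/

open Finset Filter Topology

theorem pow_succ_dvd_pow_sub_pow_of_pow_dvd_sub {R : Type*} [CommRing R] {p n : ℕ} {a b : R}
    (hn : n ≠ 0) (h : (p : R) ^ n ∣ a - b) : (p : R) ^ (n + 1) ∣ a ^ p - b ^ p := by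
  rw [← geom_sum₂_mul, pow_succ']
  exact mul_dvd_mul (dvd_geom_sum₂_self ((dvd_pow_self _ hn).trans h)) h

theorem pow_add_dvd_pow_sub_pow_of_pow_dvd_sub {R : Type*} [CommRing R] {p n j k : ℕ} {a b : R}
    (hn : n ≠ 0) (hk : p ^ j ∣ k) (h : (p : R) ^ n ∣ a - b) :
    (p : R) ^ (n + j) ∣ a ^ k - b ^ k := by
  have hpow : ∀ i, (p : R) ^ (n + i) ∣ a ^ p ^ i - b ^ p ^ i := by
    intro i
    induction i with
    | zero => simpa using h
    | succ i ih =>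
      rw [pow_succ, pow_mul, pow_mul, ← add_assoc]
      exact pow_succ_dvd_pow_sub_pow_of_pow_dvd_sub (by omega) ih
  obtain ⟨t, rfl⟩ := hk
  rw [pow_mul, pow_mul]
  exact (hpow j).trans (sub_dvd_pow_sub_pow _ _ t)

theorem sum_range_comp_mul_mod {M : Type*} [AddCommMonoid M] {m c : ℕ} (hc : c.Coprime m)
    (f : ℕ → M) : ∑ i ∈ range m, f (c * i % m) = ∑ i ∈ range m, f i := by
  rcases lt_or_ge 1 m with hm | hm
  · obtain ⟨d, -, hcd⟩ := Nat.exists_mul_mod_eq_one_of_coprime hc hm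
    have hinv : ∀ x y, x * y % m = 1 → ∀ a ∈ range m, x * (y * a % m) % m = a := by
      intro x y hxy a ha
      rw [Nat.mul_mod_mod, ← mul_assoc, Nat.mul_mod, hxy, one_mul, Nat.mod_mod,
        Nat.mod_eq_of_lt (mem_range.mp ha)]
    refine sum_nbij' (fun a => c * a % m) (fun a => d * a % m) ?_ ?_ ?_ ?_ (fun _ _ => rfl)
    · exact fun a _ => mem_range.mpr (Nat.mod_lt _ (by omega))
    · exact fun a _ => mem_range.mpr (Nat.mod_lt _ (by omega))
    · exact hinv d c (by rwa [mul_comm])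
    · exact hinv c d hcd
  · interval_cases m <;> simp

theorem exists_coprime_not_dvd_pow_sub_one {p k : ℕ} (hp : p.Prime) (hk : ¬ (p - 1) ∣ k) :
    ∃ c : ℕ, c.Coprime p ∧ ¬ (p : ℤ) ∣ c ^ k - 1 := by
  have : Fact p.Prime := ⟨hp⟩
  by_contra! h
  have hunits : ∀ u : (ZMod p)ˣ, u ^ k = 1 := fun u => by
    have hu := h _ (ZMod.val_coe_unit_coprime u)
    rw [← ZMod.intCast_zmod_eq_zero_iff_dvd] at hu
    push_cast at hu
    rw [ZMod.natCast_zmod_val, sub_eq_zero] at hu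
    exact Units.ext (by simpa using hu)
  refine hk ?_
  simpa [IsCyclic.exponent_eq_card, Nat.card_eq_fintype_card, ZMod.card_units,
    Nat.totient_prime hp] using Monoid.exponent_dvd_of_forall_pow_eq_one hunits

theorem pow_add_padicValNat_dvd_sum_range_pow {p k N : ℕ} (hp : p.Prime) (hk : ¬ (p - 1) ∣ k)
    (hN : N ≠ 0) : (p : ℤ) ^ (N + padicValNat p k) ∣ ∑ i ∈ range (p ^ N), (i : ℤ) ^ k := by
  obtain ⟨c, hcp, hck⟩ := exists_coprime_not_dvd_pow_sub_one hp hk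
  have hmod : ∀ i, (p : ℤ) ^ (N + padicValNat p k) ∣
      ((c * i : ℕ) : ℤ) ^ k - ((c * i % p ^ N : ℕ) : ℤ) ^ k :=
    fun i => pow_add_dvd_pow_sub_pow_of_pow_dvd_sub hN pow_padicValNat_dvd <| by
      simpa using Nat.modEq_iff_dvd.mp (Nat.mod_modEq (c * i) (p ^ N))
  have hperm := sum_range_comp_mul_mod (hcp.pow_right N) (fun i => (i : ℤ) ^ k)
  have hmul : (p : ℤ) ^ (N + padicValNat p k) ∣
      (c ^ k - 1) * ∑ i ∈ range (p ^ N), (i : ℤ) ^ k := by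
    rw [sub_one_mul, mul_sum, ← hperm, ← sum_sub_distrib]
    exact dvd_sum fun i _ => by simpa [mul_pow] using hmod i
  exact (Nat.prime_iff_prime_int.mp hp).pow_dvd_of_dvd_mul_left _ hck hmul

theorem sum_range_pow_div_sub_bernoulli (n k : ℕ) (hn : n ≠ 0) :
    (∑ i ∈ range n, (i : ℚ) ^ k) / n - bernoulli k =
      ∑ i ∈ range k, bernoulli i * (k + 1).choose i / (k + 1) * (n : ℚ) ^ (k - i) := by
  have hn' : (n : ℚ) ≠ 0 := Nat.cast_ne_zero.mpr hn
  rw [sum_range_pow, sum_range_succ, Nat.choose_succ_self_right, Nat.add_sub_cancel_left,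
    add_div, sum_div]
  have hlast : bernoulli k * ((k + 1 : ℕ) : ℚ) * (n : ℚ) ^ 1 / (k + 1) / n = bernoulli k := by
    push_cast
    field_simp
  rw [hlast, add_sub_cancel_right]
  refine sum_congr rfl fun i hi => ?_
  rw [show k + 1 - i = k - i + 1 by have := mem_range.mp hi; omega, pow_succ]
  field_simp

theorem Nat.factorization_prod_pow_apply {s : Finset ℕ} (hs : ∀ p ∈ s, p.Prime) (e : ℕ → ℕ)
    (r : ℕ) : (∏ p ∈ s, p ^ e p).factorization r = if r ∈ s then e r else 0 := by
  rw [Nat.factorization_prod fun p hp => pow_ne_zero _ (hs p hp).ne_zero, Finset.sum_apply']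
  simp_rw [Nat.factorization_pow, Finsupp.smul_apply]
  rw [← sum_ite_eq' s r e]
  exact sum_congr rfl fun p hp => by simp [(hs p hp).factorization, Finsupp.single_apply]

theorem padicNorm_natCast {p : ℕ} (n : ℕ) (hn : n ≠ 0) :
    padicNorm p (n : ℚ) = (p : ℚ) ^ (-(padicValNat p n : ℤ)) := by
  rw [padicNorm.eq_zpow_of_nonzero (Nat.cast_ne_zero.mpr hn), padicValRat.of_nat]

section
variable {p : ℕ} [Fact p.Prime]

theorem padicValNat_den (q : ℚ) : padicValNat p q.den = (-padicValRat p q).toNat := by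
  rw [padicValRat_def]
  by_cases h : p ∣ q.den
  · have hnum : padicValInt p q.num = 0 := padicValNat.eq_zero_of_not_dvd fun h' =>
      (Fact.out : p.Prime).one_lt.ne' (Nat.eq_one_of_dvd_coprimes q.reduced h' h)
    omega
  · rw [padicValNat.eq_zero_of_not_dvd h]
    omega

theorem padicValNat_den_of_padicNorm_eq {q : ℚ} {m : ℕ}
    (h : padicNorm p q = (p : ℚ) ^ (m : ℤ)) : padicValNat p q.den = m := by
  have hp : (1 : ℚ) < p := by exact_mod_cast (Fact.out : p.Prime).one_lt
  have hq : q ≠ 0 := by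
    rintro rfl
    exact (zpow_pos (by positivity) _).ne (padicNorm.zero.symm.trans h)
  rw [padicNorm.eq_zpow_of_nonzero hq] at h
  rw [padicValNat_den, zpow_right_injective₀ (by positivity) hp.ne' h]
  simp

theorem padicValNat_den_eq_zero_of_padicNorm_le_one {q : ℚ} (h : padicNorm p q ≤ 1) :
    padicValNat p q.den = 0 := by
  have hp : (1 : ℚ) < p := by exact_mod_cast (Fact.out : p.Prime).one_lt
  rcases eq_or_ne q 0 with rfl | hq
  · simp
  rw [padicNorm.eq_zpow_of_nonzero hq, zpow_le_one_iff_right₀ hp] at h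
  rw [padicValNat_den]
  omega

theorem eventually_padicNorm_mul_pow_pow_le (a : ℚ) {m : ℕ} (hm : m ≠ 0) (e : ℤ) :
    ∀ᶠ N in atTop, padicNorm p (a * ((p : ℚ) ^ N) ^ m) ≤ (p : ℚ) ^ (-e) := by
  have hp : (1 : ℚ) < p := by exact_mod_cast (Fact.out : p.Prime).one_lt
  have hlim : Tendsto (fun N => padicNorm p a * ((p : ℚ)⁻¹) ^ N) atTop (𝓝 0) := by
    simpa using (tendsto_pow_atTop_nhds_zero_of_lt_one (by positivity)
      (inv_lt_one_of_one_lt₀ hp)).const_mul (padicNorm p a)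
  filter_upwards [hlim.eventually_lt_const (by positivity : (0 : ℚ) < (p : ℚ) ^ (-e))] with N hN
  refine le_trans ?_ hN.le
  rw [padicNorm.mul, IsAbsoluteValue.abv_pow (padicNorm p), IsAbsoluteValue.abv_pow (padicNorm p),
    padicNorm.padicNorm_p_of_prime]
  exact mul_le_mul_of_nonneg_left (pow_le_of_le_one (by positivity)
    (pow_le_one₀ (by positivity) (inv_le_one_of_one_le₀ hp.le)) hm) (padicNorm.nonneg a)

theorem eventually_padicNorm_sum_range_pow_div_sub_bernoulli_le (k : ℕ) (e : ℤ) :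
    ∀ᶠ N in atTop, padicNorm p ((∑ i ∈ range (p ^ N), (i : ℚ) ^ k) / (p : ℚ) ^ N - bernoulli k)
      ≤ (p : ℚ) ^ (-e) := by
  have hterms := (eventually_all_finset (range k)).mpr fun i hi =>
    eventually_padicNorm_mul_pow_pow_le (p := p) (bernoulli i * (k + 1).choose i / (k + 1))
      (m := k - i) (by have := mem_range.mp hi; omega) e
  filter_upwards [hterms] with N hN
  have h := sum_range_pow_div_sub_bernoulli (p ^ N) k (pow_ne_zero _ (Fact.out : p.Prime).ne_zero)
  push_cast at h
  rw [h]
  exact padicNorm.sum_le' (fun i hi => by simpa [pow_mul] using hN i hi) (by positivity)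

theorem padicNorm_bernoulli_div_le_one {k : ℕ} (hk : ¬ (p - 1) ∣ k) :
    padicNorm p (bernoulli k / k) ≤ 1 := by
  have hp : (1 : ℚ) < p := by exact_mod_cast (Fact.out : p.Prime).one_lt
  have hk0 : k ≠ 0 := by
    rintro rfl
    exact hk (dvd_zero _)
  set w := padicValNat p k
  obtain ⟨N, happrox, hN⟩ := ((eventually_padicNorm_sum_range_pow_div_sub_bernoulli_le
    (p := p) k w).and (eventually_ne_atTop 0)).exists
  set S := ∑ i ∈ range (p ^ N), (i : ℚ) ^ k
  have hS : padicNorm p (S / (p : ℚ) ^ N) ≤ (p : ℚ) ^ (-(w : ℤ)) := by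
    have hdvd := pow_add_padicValNat_dvd_sum_range_pow (Fact.out : p.Prime) hk hN
    rw [← Nat.cast_pow] at hdvd
    have hnorm := padicNorm.dvd_iff_norm_le.mp hdvd
    simp only [Int.cast_sum, Int.cast_pow, Int.cast_natCast] at hnorm
    rw [padicNorm.div, IsAbsoluteValue.abv_pow (padicNorm p), padicNorm.padicNorm_p_of_prime,
      inv_pow, div_inv_eq_mul]
    calc padicNorm p S * (p : ℚ) ^ N ≤ (p : ℚ) ^ (-((N + w : ℕ) : ℤ)) * (p : ℚ) ^ N := by gcongr
      _ = (p : ℚ) ^ (-(w : ℤ)) := by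
        rw [← zpow_natCast, ← zpow_add₀ (by positivity)]
        push_cast
        ring_nf
  have hB : padicNorm p (bernoulli k) ≤ (p : ℚ) ^ (-(w : ℤ)) := by
    rw [← sub_sub_cancel (S / (p : ℚ) ^ N) (bernoulli k)]
    exact padicNorm.sub.trans (max_le hS happrox)
  rw [padicNorm.div, padicNorm_natCast k hk0, div_le_one (by positivity)]
  exact hB

theorem padicNorm_bernoulli_add_inv_le_one {k : ℕ} (hk : 0 < k) (hke : Even k)
    (hd : (p - 1) ∣ k) : padicNorm p (bernoulli k + (p : ℚ)⁻¹) ≤ 1 := by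
  have hp : p.Prime := Fact.out
  obtain ⟨j, rfl⟩ := even_iff_two_dvd.mp hke
  obtain ⟨z, hz⟩ := Bernoulli.vonStaudt_clausen j
  set s := (range (2 * j + 2)).filter fun q => q.Prime ∧ (q - 1) ∣ 2 * j
  have hps : p ∈ s := mem_filter.mpr
    ⟨mem_range.mpr (by have := Nat.le_of_dvd hk hd; omega), hp, hd⟩
  rw [← add_sum_erase s _ hps, one_div, ← add_assoc] at hz
  rw [eq_sub_of_add_eq hz.symm]
  refine padicNorm.sub.trans
    (max_le (padicNorm.of_int z) (padicNorm.sum_le' (fun q hq => ?_) zero_le_one))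
  obtain ⟨hqp, hq⟩ := mem_erase.mp hq
  have hpq : ¬ p ∣ q := fun h =>
    hqp ((Nat.prime_dvd_prime_iff_eq hp (mem_filter.mp hq).2.1).mp h).symm
  rw [one_div, IsAbsoluteValue.abv_inv (padicNorm p), (padicNorm.nat_eq_one_iff q).mpr hpq,
    inv_one]

theorem padicNorm_bernoulli_div_eq {k : ℕ} (hk : 0 < k) (hke : Even k) (hd : (p - 1) ∣ k) :
    padicNorm p (bernoulli k / k) = (p : ℚ) ^ ((padicValNat p k + 1 : ℕ) : ℤ) := by
  have hp : (1 : ℚ) < p := by exact_mod_cast (Fact.out : p.Prime).one_lt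
  have hinv : padicNorm p (-(p : ℚ)⁻¹) = p := by
    rw [padicNorm.neg, IsAbsoluteValue.abv_inv (padicNorm p), padicNorm.padicNorm_p_of_prime,
      inv_inv]
  have hB : padicNorm p (bernoulli k) = p := by
    have hle := padicNorm_bernoulli_add_inv_le_one hk hke hd
    rw [← add_neg_cancel_right (bernoulli k) (p : ℚ)⁻¹, padicNorm.add_eq_max_of_ne (by linarith),
      hinv, max_eq_right (by linarith)]
  rw [padicNorm.div, hB, padicNorm_natCast k hk.ne', div_eq_mul_inv, ← zpow_neg, neg_neg,
    ← zpow_one_add₀ (by positivity)]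
  push_cast
  ring_nf

theorem padicValNat_den_bernoulli_div {k : ℕ} (hk : 0 < k) (hke : Even k) :
    padicValNat p (bernoulli k / k).den = if (p - 1) ∣ k then padicValNat p k + 1 else 0 := by
  split_ifs with hd
  · exact padicValNat_den_of_padicNorm_eq (padicNorm_bernoulli_div_eq hk hke hd)
  · exact padicValNat_den_eq_zero_of_padicNorm_le_one (padicNorm_bernoulli_div_le_one hd)

end

/-- For a positive even integer `k`, the denominator of `B_k/k`
(in lowest terms) equals `∏_{(p-1) ∣ k, p prime} p^{v_p(k)+1}`. -/
theorem stmt10 (k : ℕ) (hk : 0 < k) (hke : Even k) :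
    (bernoulli k / (k : ℚ)).den =
      ∏ p ∈ Finset.filter (fun p => p.Prime ∧ (p - 1) ∣ k) (Finset.range (k + 2)),
        p ^ (padicValNat p k + 1) := by
  set P := (range (k + 2)).filter fun p => p.Prime ∧ (p - 1) ∣ k
  have hP : ∀ p, p ∈ P ↔ p.Prime ∧ (p - 1) ∣ k := fun p => by
    refine ⟨fun h => (mem_filter.mp h).2, fun h => mem_filter.mpr ⟨mem_range.mpr ?_, h⟩⟩
    have := Nat.le_of_dvd hk h.2
    omega
  have hPprime : ∀ p ∈ P, p.Prime := fun p hp => ((hP p).mp hp).1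
  refine Nat.eq_of_factorization_eq (Rat.den_nz _)
    (prod_ne_zero_iff.mpr fun p hp => pow_ne_zero _ (hPprime p hp).ne_zero) fun r => ?_
  rw [Nat.factorization_prod_pow_apply hPprime]
  by_cases hr : r.Prime
  · have : Fact r.Prime := ⟨hr⟩
    rw [Nat.factorization_def _ hr, padicValNat_den_bernoulli_div hk hke]
    simp [hP, hr]
  · simp [Nat.factorization_eq_zero_of_not_prime _ hr, hP, hr]
end

section
/- Let p be an odd prime and k a positive even integer with (p-1) | k. If c ∈ Z_p satisfies B_k/k + (p-1)/(pk) = c, then v_p(B_k/k) = v_p((p-1)/(pk)) = -(v_p(k)+1). In particular the power of p in the denominator of B_k/k is exactly p^{v_p(k)+1}. -/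
/-- Let `p` be an odd prime, `k` a positive even integer with
`(p-1) ∣ k`. If `c ∈ ℚ` with `B_k/k + (p-1)/(pk) = c` is a `p`-adic integer
(Carlitz), then `v_p(B_k/k) = v_p((p-1)/(pk)) = -(v_p(k)+1)`; in particular the
power of `p` in the denominator of `B_k/k` is exactly `p^{v_p(k)+1}`. -/
theorem stmt11 (p : ℕ) (hp : p.Prime) (hodd : Odd p)
    (k : ℕ) (hk : 0 < k) (hke : Even k) (hdvd : (p - 1) ∣ k)
    (c : ℚ) (hc : bernoulli k / (k : ℚ) + ((p : ℚ) - 1) / ((p : ℚ) * k) = c)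
    (hcint : ¬ (p ∣ c.den)) :
    padicValRat p (bernoulli k / (k : ℚ)) = padicValRat p (((p : ℚ) - 1) / ((p : ℚ) * k)) ∧
      padicValRat p (bernoulli k / (k : ℚ)) = -(padicValNat p k + 1 : ℤ) ∧
      padicValNat p ((bernoulli k / (k : ℚ)).den) = padicValNat p k + 1 := by
  haveI : Fact p.Prime := ⟨hp⟩
  set B : ℚ := bernoulli k / (k : ℚ) with hB
  set x : ℚ := ((p : ℚ) - 1) / ((p : ℚ) * k) with hx
  have hp1 : 1 ≤ p := hp.one_lt.le
  have hp2 : 2 ≤ p := hp.two_le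
  have hkQ : (k : ℚ) ≠ 0 := Nat.cast_ne_zero.mpr hk.ne'
  have hpQ : (p : ℚ) ≠ 0 := Nat.cast_ne_zero.mpr hp.pos.ne'
  have hpm1 : ((p : ℚ) - 1) ≠ 0 := by
    have : (1 : ℚ) < (p : ℚ) := by exact_mod_cast hp.one_lt
    linarith
  have hxne : x ≠ 0 := div_ne_zero hpm1 (mul_ne_zero hpQ hkQ)
  -- valuation of x
  have hxval : padicValRat p x = -(padicValNat p k + 1 : ℤ) := by
    have h1 : ((p : ℚ) - 1) = ((p - 1 : ℕ) : ℚ) := by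
      push_cast [Nat.cast_sub hp1]; ring
    have h2 : ((p : ℚ) * k) = ((p * k : ℕ) : ℚ) := by push_cast; ring
    rw [hx, h1, h2, padicValRat.div (by rw [← h1]; exact hpm1)
      (by rw [← h2]; exact mul_ne_zero hpQ hkQ), padicValRat.of_nat, padicValRat.of_nat,
      padicValNat.eq_zero_of_not_dvd (n := p - 1) (fun h => absurd (Nat.le_of_dvd (by omega) h) (by omega)), padicValNat.mul hp.pos.ne' hk.ne',
      padicValNat.self hp.one_lt]
    push_cast; ring
  -- valuation of c is nonnegative
  have hcval : 0 ≤ padicValRat p c := by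
    rw [padicValRat_def, padicValNat.eq_zero_of_not_dvd hcint]
    simp
  have hxneg : padicValRat p x < 0 := by
    rw [hxval]; omega
  -- B ≠ 0
  have hBne : B ≠ 0 := by
    intro h
    rw [h, zero_add] at hc
    rw [hc] at hxneg
    omega
  -- key: v B = v x
  have key : padicValRat p B = padicValRat p x := by
    by_contra hne
    have hcne : c ≠ 0 := by
      intro h
      rw [h] at hc
      have : B = -x := by linarith [hc]
      rw [this, padicValRat.neg] at hne
      exact hne rfl
    have := padicValRat.add_eq_min (p := p) (q := B) (r := x) (hc ▸ hcne) hBne hxne hne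
    rw [hc] at this
    have : padicValRat p c ≤ padicValRat p x := this ▸ min_le_right _ _
    omega
  refine ⟨key, key.trans hxval, ?_⟩
  -- denominator part
  have hBval : padicValRat p B = -(padicValNat p k + 1 : ℤ) := key.trans hxval
  have hdenpos : padicValNat p B.den ≠ 0 := by
    rw [padicValRat_def] at hBval
    omega
  have hden : p ∣ B.den := (dvd_iff_padicValNat_ne_zero B.den_nz).mpr hdenpos
  have hnum : padicValInt p B.num = 0 := by
    apply padicValInt.eq_zero_of_not_dvd
    intro hdvdnum
    have h1 : p ∣ B.num.natAbs := Int.natCast_dvd.mp hdvdnum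
    exact hp.ne_one (Nat.dvd_one.mp (B.reduced ▸ Nat.dvd_gcd h1 hden))
  have : (padicValInt p B.num : ℤ) - (padicValNat p B.den : ℤ) = -(padicValNat p k + 1 : ℤ) :=
    hBval
  rw [hnum] at this
  omega
end

section
/- Let ℓ be an odd prime, k a positive integer with (ℓ-1) ∤ k, and k' ≡ k (mod (ℓ-1)ℓ^{n-1}) with (ℓ-1) ∤ k'. Then the ℓ-parts of (1-ℓ^{k-1})B_k/k and (1-ℓ^{k'-1})B_{k'}/k' are congruent modulo ℓ^n; equivalently, v_ℓ of the numerator of B_k/k and of B_{k'}/k' agree up to ℓ^n in the sense that the ℓ-power parts of the numerators are congruent mod ℓ^n. -/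
/-!
Fix `c` whose residue generates `(ℤ/p)ˣ`. For a reduced residue `a` modulo `m = p ^ N` write
`c * a = r a + m * q a` with `r a < m`; `a ↦ r a` permutes the reduced residues, so expanding
`(r a + m * q a) ^ k` to first order in `m` gives
`(c ^ k - 1) * ∑ a ^ k ≡ k * m * ∑ (r a) ^ (k - 1) * q a  (mod m ^ 2)`.
By Faulhaber's formula `p ^ (-N) * ∑ a ^ k → (1 - p ^ (k - 1)) * B_k` in `ℚ_[p]`, so the
integers `∑ (r a) ^ (k - 1) * q a` tend to `(c ^ k - 1) * (1 - p ^ (k - 1)) * B_k / k`.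
By Euler's theorem these integers for `k` and `k'` agree modulo `p ^ n`, and `c ^ k - 1` is a
`p`-adic unit because `(p - 1) ∤ k`; in the limit this is Kummer's congruence in `ℚ_[p]`.
Two `p`-adic numbers that are congruent modulo `p ^ n` have the same valuation unless both
valuations are at least `n`, which gives the congruence of `p`-parts. For odd `k` both sides
vanish.
-/

open Finset Filter Topology
open scoped Nat

theorem Nat.ModEq.pow_of_modEq_totient {a m k k' : ℕ} (ha : a.Coprime m)
    (h : k ≡ k' [MOD φ m]) : a ^ k ≡ a ^ k' [MOD m] := by
  rcases lt_or_ge 1 m with hm | hm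
  · rw [Nat.ModEq, Nat.pow_totient_mod hm ha, Nat.pow_totient_mod hm ha (k := k'), h]
  · interval_cases m
    · rw [Nat.totient_zero, Nat.modEq_zero_iff] at h
      rw [h]
    · exact Nat.modEq_one

theorem exists_add_pow_eq {R : Type*} [CommRing R] (x y : R) (k : ℕ) :
    ∃ e : R, (x + y) ^ k = x ^ k + k * x ^ (k - 1) * y + e * y ^ 2 := by
  obtain ⟨e, he⟩ := Polynomial.binomExpansion (Polynomial.X ^ k : Polynomial R) x y
  exact ⟨e, by simpa [Polynomial.derivative_X_pow, mul_assoc] using he⟩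

def reducedResidues (m : ℕ) : Finset ℕ := (range m).filter m.Coprime

@[simp]
theorem mem_reducedResidues {m a : ℕ} : a ∈ reducedResidues m ↔ a < m ∧ m.Coprime a := by
  simp [reducedResidues]

theorem mul_mod_mem_reducedResidues {m c a : ℕ} (hc : c.Coprime m) (ha : a ∈ reducedResidues m) :
    c * a % m ∈ reducedResidues m := by
  rw [mem_reducedResidues] at ha ⊢
  refine ⟨Nat.mod_lt _ (by omega), ?_⟩
  rw [Nat.coprime_comm, ZMod.coprime_mod_iff_coprime]
  exact Nat.Coprime.mul_left hc ha.2.symm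

theorem sum_reducedResidues_mul_mod {M : Type*} [AddCommMonoid M] {m c : ℕ} (hc : c.Coprime m)
    (f : ℕ → M) :
    ∑ a ∈ reducedResidues m, f (c * a % m) = ∑ a ∈ reducedResidues m, f a := by
  have hinj : Set.InjOn (fun a => c * a % m) (reducedResidues m) := by
    intro a ha b hb hab
    rw [mem_coe, mem_reducedResidues] at ha hb
    have := Nat.ModEq.cancel_left_of_coprime (hc.symm : m.gcd c = 1) hab
    rwa [Nat.ModEq, Nat.mod_eq_of_lt ha.1, Nat.mod_eq_of_lt hb.1] at this
  have himage : (reducedResidues m).image (fun a => c * a % m) = reducedResidues m :=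
    eq_of_subset_of_card_le (image_subset_iff.2 fun a ha => mul_mod_mem_reducedResidues hc ha)
      (card_image_of_injOn hinj).ge
  rw [← sum_image hinj, himage]

theorem sum_reducedResidues_prime_pow {M : Type*} [AddCommGroup M] {p : ℕ} (hp : p.Prime)
    (N : ℕ) (f : ℕ → M) :
    ∑ a ∈ reducedResidues (p ^ (N + 1)), f a =
      ∑ a ∈ range (p ^ (N + 1)), f a - ∑ b ∈ range (p ^ N), f (p * b) := by
  have hmultiples : (range (p ^ (N + 1))).filter (fun a => ¬ (p ^ (N + 1)).Coprime a) =
      (range (p ^ N)).image (p * ·) := by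
    ext a
    simp only [mem_filter, mem_range, mem_image, Nat.coprime_pow_left_iff N.succ_pos,
      hp.coprime_iff_not_dvd, not_not]
    constructor
    · rintro ⟨ha, b, rfl⟩
      exact ⟨b, by rw [pow_succ'] at ha; exact Nat.lt_of_mul_lt_mul_left ha, rfl⟩
    · rintro ⟨b, hb, rfl⟩
      exact ⟨by rw [pow_succ']; exact Nat.mul_lt_mul_of_pos_left hb hp.pos, b, rfl⟩
  rw [eq_sub_iff_add_eq, ← sum_image (mul_right_injective₀ hp.ne_zero).injOn, ← hmultiples,
    reducedResidues, sum_filter_add_sum_filter_not]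

def twistSum (m c k : ℕ) : ℤ :=
  ∑ a ∈ reducedResidues m, ((c * a % m : ℕ) : ℤ) ^ (k - 1) * ((c * a / m : ℕ) : ℤ)

theorem sq_dvd_pow_sub_one_mul_sum_sub_twistSum {m c : ℕ} (hc : c.Coprime m) (k : ℕ) :
    (m : ℤ) ^ 2 ∣ ((c : ℤ) ^ k - 1) * ∑ a ∈ reducedResidues m, (a : ℤ) ^ k
      - k * m * twistSum m c k := by
  have hexpand : ∀ a : ℕ, ∃ e : ℤ, ((c : ℤ) * a) ^ k = ((c * a % m : ℕ) : ℤ) ^ k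
      + k * ((c * a % m : ℕ) : ℤ) ^ (k - 1) * (m * (c * a / m : ℕ))
      + e * (m * (c * a / m : ℕ)) ^ 2 := by
    intro a
    have hdiv : ((c : ℤ) * a) = ((c * a % m : ℕ) : ℤ) + m * (c * a / m : ℕ) := by
      exact_mod_cast (Nat.mod_add_div (c * a) m).symm
    rw [hdiv]
    exact exists_add_pow_eq _ _ k
  choose e he using hexpand
  refine ⟨∑ a ∈ reducedResidues m, e a * ((c * a / m : ℕ) : ℤ) ^ 2, ?_⟩
  rw [sub_one_mul, mul_sum, ← sum_reducedResidues_mul_mod hc (fun a => (a : ℤ) ^ k), twistSum,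
    mul_sum, mul_sum, ← sum_sub_distrib, ← sum_sub_distrib]
  refine sum_congr rfl fun a _ => ?_
  rw [← mul_pow, he a]
  push_cast
  ring

theorem twistSum_modEq {m q c k k' : ℕ} (hq : q ∣ m) (hc : c.Coprime m)
    (h : k - 1 ≡ k' - 1 [MOD φ q]) : twistSum m c k ≡ twistSum m c k' [ZMOD q] := by
  refine Int.ModEq.sum fun a ha => Int.ModEq.mul_right _ ?_
  have hcop : (c * a % m).Coprime q := Nat.Coprime.coprime_dvd_right hq
    (mem_reducedResidues.1 (mul_mod_mem_reducedResidues hc ha)).2.symm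
  exact_mod_cast Nat.ModEq.pow_of_modEq_totient hcop h

section Faulhaber

variable {K : Type*} [Field K]

def faulhaber (k : ℕ) (x : K) : K :=
  ∑ i ∈ range (k + 1), ((bernoulli i * (k + 1).choose i / (k + 1) : ℚ) : K) * x ^ (k - i)

theorem sum_range_pow_eq_mul_faulhaber [CharZero K] (M k : ℕ) :
    ∑ a ∈ range M, (a : K) ^ k = M * faulhaber k (M : K) := by
  have h := congrArg (Rat.cast : ℚ → K) (sum_range_pow M k)
  push_cast at h
  rw [h, faulhaber, mul_sum]
  refine sum_congr rfl fun i hi => ?_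
  rw [show k + 1 - i = (k - i) + 1 by grind, pow_succ]
  push_cast
  ring

theorem faulhaber_zero [CharZero K] (k : ℕ) : faulhaber k (0 : K) = bernoulli k := by
  rw [faulhaber, sum_range_succ, sum_eq_zero fun i hi => by
    rw [zero_pow (by grind), mul_zero]]
  have : (k + 1 : ℚ) ≠ 0 := by positivity
  simp [Nat.choose_succ_self_right]
  field_simp

theorem continuous_faulhaber [TopologicalSpace K] [IsTopologicalRing K] (k : ℕ) :
    Continuous (faulhaber k : K → K) := by
  unfold faulhaber
  fun_prop

theorem sum_reducedResidues_pow_div_eq [CharZero K] {p : ℕ} (hp : p.Prime) {k : ℕ} (hk : 1 ≤ k)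
    (N : ℕ) :
    (∑ a ∈ reducedResidues (p ^ (N + 1)), (a : K) ^ k) / (p : K) ^ (N + 1) =
      faulhaber k ((p : K) ^ (N + 1)) - (p : K) ^ (k - 1) * faulhaber k ((p : K) ^ N) := by
  have hp0 : (p : K) ≠ 0 := by exact_mod_cast hp.ne_zero
  rw [sum_reducedResidues_prime_pow hp, sum_range_pow_eq_mul_faulhaber,
    div_eq_iff (pow_ne_zero _ hp0)]
  simp only [Nat.cast_mul, mul_pow, ← mul_sum, sum_range_pow_eq_mul_faulhaber, Nat.cast_pow]
  obtain ⟨j, rfl⟩ : ∃ j, k = j + 1 := ⟨k - 1, by omega⟩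
  simp only [add_tsub_cancel_right]
  ring

end Faulhaber

def bernoulliEuler (p k : ℕ) : ℚ := (1 - (p : ℚ) ^ (k - 1)) * (bernoulli k / k)

section Padic

variable {p : ℕ} [hp : Fact p.Prime]

theorem tendsto_pow_mul_intCast (e : ℕ → ℤ) :
    Tendsto (fun N => (p : ℚ_[p]) ^ N * e N) atTop (𝓝 0) := by
  have hpow : Tendsto (fun N => (p : ℚ_[p]) ^ N) atTop (𝓝 0) :=
    tendsto_pow_atTop_nhds_zero_of_norm_lt_one Padic.norm_p_lt_one
  have hnorm : Tendsto (fun N => ‖(p : ℚ_[p]) ^ N‖) atTop (𝓝 0) := by simpa using hpow.norm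
  refine squeeze_zero_norm (fun N => ?_) hnorm
  rw [norm_mul]
  exact mul_le_of_le_one_right (norm_nonneg _) (Padic.norm_int_le_one _)

theorem tendsto_sum_reducedResidues_pow_div {k : ℕ} (hk : 1 ≤ k) :
    Tendsto (fun N => (∑ a ∈ reducedResidues (p ^ N), (a : ℚ_[p]) ^ k) / (p : ℚ_[p]) ^ N) atTop
      (𝓝 ((1 - (p : ℚ_[p]) ^ (k - 1)) * bernoulli k)) := by
  have hpow : Tendsto (fun N => (p : ℚ_[p]) ^ N) atTop (𝓝 0) :=
    tendsto_pow_atTop_nhds_zero_of_norm_lt_one Padic.norm_p_lt_one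
  have hf := ((continuous_faulhaber k).tendsto (0 : ℚ_[p])).comp hpow
  rw [← tendsto_add_atTop_iff_nat 1]
  simp only [sum_reducedResidues_pow_div_eq hp.out hk]
  convert (hf.comp (tendsto_add_atTop_nat 1)).sub (hf.const_mul ((p : ℚ_[p]) ^ (k - 1))) using 2
  · rfl
  · rw [faulhaber_zero]
    ring

theorem tendsto_twistSum {c k : ℕ} (hc : c.Coprime p) (hk : 1 ≤ k) :
    Tendsto (fun N => (twistSum (p ^ N) c k : ℚ_[p])) atTop
      (𝓝 (((c : ℚ_[p]) ^ k - 1) * bernoulliEuler p k)) := by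
  choose e he using fun N => sq_dvd_pow_sub_one_mul_sum_sub_twistSum (hc.pow_right N) k
  have hp0 : (p : ℚ_[p]) ≠ 0 := by exact_mod_cast hp.out.ne_zero
  have hk0 : (k : ℚ_[p]) ≠ 0 := by exact_mod_cast (show k ≠ 0 by omega)
  have heq : ∀ N, (twistSum (p ^ N) c k : ℚ_[p]) =
      (((c : ℚ_[p]) ^ k - 1) * ((∑ a ∈ reducedResidues (p ^ N), (a : ℚ_[p]) ^ k) / p ^ N)
        - p ^ N * e N) / k := by
    intro N
    have h := congrArg (Int.cast : ℤ → ℚ_[p]) (he N)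
    push_cast at h
    field_simp
    linear_combination -h
  simp only [heq]
  convert (((tendsto_sum_reducedResidues_pow_div hk).const_mul ((c : ℚ_[p]) ^ k - 1)).sub
    (tendsto_pow_mul_intCast e)).div_const (k : ℚ_[p]) using 2
  simp only [bernoulliEuler]
  push_cast
  ring

theorem exists_coprime_norm_pow_sub_one_eq_one :
    ∃ c : ℕ, c.Coprime p ∧ ∀ k, ¬ (p - 1) ∣ k → ‖(c : ℚ_[p]) ^ k - 1‖ = 1 := by
  obtain ⟨g, hg⟩ := IsCyclic.exists_ofOrder_eq_natCard (α := (ZMod p)ˣ)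
  refine ⟨(g : ZMod p).val, ZMod.val_coe_unit_coprime g, fun k hk => ?_⟩
  have hcast : ((g : ZMod p).val : ℚ_[p]) ^ k - 1 = (((g : ZMod p).val ^ k - 1 : ℤ) : ℚ_[p]) := by
    push_cast
    ring
  rw [hcast]
  refine le_antisymm (Padic.norm_int_le_one _) (not_lt.1 fun hlt => hk ?_)
  rw [Padic.norm_intCast_lt_one_iff, ← ZMod.intCast_zmod_eq_zero_iff_dvd] at hlt
  push_cast at hlt
  rw [ZMod.natCast_val, ZMod.cast_id, sub_eq_zero] at hlt
  have hg1 : g ^ k = 1 := Units.ext (by simpa using hlt)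
  rw [← ZMod.card_units p, ← Nat.card_eq_fintype_card, ← hg]
  exact orderOf_dvd_of_pow_eq_one hg1

theorem norm_bernoulliEuler_le_one {k : ℕ} (hk : ¬ (p - 1) ∣ k) :
    ‖(bernoulliEuler p k : ℚ_[p])‖ ≤ 1 := by
  obtain ⟨c, hc, hunit⟩ := exists_coprime_norm_pow_sub_one_eq_one (p := p)
  have hk1 : 1 ≤ k := Nat.one_le_iff_ne_zero.2 fun h => hk (h ▸ dvd_zero _)
  have h := le_of_tendsto' (tendsto_twistSum hc hk1).norm fun N => Padic.norm_int_le_one _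
  rwa [norm_mul, hunit k hk, one_mul] at h

theorem norm_bernoulliEuler_sub_le {n k k' : ℕ} (hn : 1 ≤ n) (hk : ¬ (p - 1) ∣ k)
    (hk' : ¬ (p - 1) ∣ k') (h : k ≡ k' [MOD (p - 1) * p ^ (n - 1)]) :
    ‖(bernoulliEuler p k : ℚ_[p]) - bernoulliEuler p k'‖ ≤ (p : ℝ) ^ (-n : ℤ) := by
  obtain ⟨c, hc, hunit⟩ := exists_coprime_norm_pow_sub_one_eq_one (p := p)
  have hk1 : 1 ≤ k := Nat.one_le_iff_ne_zero.2 fun h => hk (h ▸ dvd_zero _)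
  have hk1' : 1 ≤ k' := Nat.one_le_iff_ne_zero.2 fun h => hk' (h ▸ dvd_zero _)
  have htot : k ≡ k' [MOD φ (p ^ n)] := by
    rwa [Nat.totient_prime_pow hp.out hn, mul_comm]
  have htot' : k - 1 ≡ k' - 1 [MOD φ (p ^ n)] :=
    Nat.ModEq.add_right_cancel' 1 (by rwa [Nat.sub_add_cancel hk1, Nat.sub_add_cancel hk1'])
  have htwist : ‖((c : ℚ_[p]) ^ k - 1) * bernoulliEuler p k
      - ((c : ℚ_[p]) ^ k' - 1) * bernoulliEuler p k'‖ ≤ (p : ℝ) ^ (-n : ℤ) := by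
    refine le_of_tendsto ((tendsto_twistSum hc hk1).sub (tendsto_twistSum hc hk1')).norm ?_
    filter_upwards [eventually_ge_atTop n] with N hN
    rw [← Int.cast_sub, Padic.norm_int_le_pow_iff_dvd]
    exact_mod_cast (twistSum_modEq (pow_dvd_pow p hN) (hc.pow_right N) htot').symm.dvd
  have hc_pow : ‖(c : ℚ_[p]) ^ k - (c : ℚ_[p]) ^ k'‖ ≤ (p : ℝ) ^ (-n : ℤ) := by
    rw [show (c : ℚ_[p]) ^ k - (c : ℚ_[p]) ^ k' = (((c : ℤ) ^ k - (c : ℤ) ^ k' : ℤ) : ℚ_[p]) by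
      push_cast; ring, Padic.norm_int_le_pow_iff_dvd]
    exact_mod_cast
      ((Nat.modEq_iff_dvd ..).1 (Nat.ModEq.pow_of_modEq_totient (hc.pow_right n) htot).symm)
  calc ‖(bernoulliEuler p k : ℚ_[p]) - bernoulliEuler p k'‖
      = ‖((c : ℚ_[p]) ^ k - 1) * (bernoulliEuler p k - bernoulliEuler p k')‖ := by
        rw [norm_mul, hunit k hk, one_mul]
    _ = ‖(((c : ℚ_[p]) ^ k - 1) * bernoulliEuler p k
          - ((c : ℚ_[p]) ^ k' - 1) * bernoulliEuler p k')
          + -(((c : ℚ_[p]) ^ k - (c : ℚ_[p]) ^ k') * bernoulliEuler p k')‖ := by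
        ring_nf
    _ ≤ (p : ℝ) ^ (-n : ℤ) := by
        refine (Padic.nonarchimedean _ _).trans (max_le htwist ?_)
        rw [norm_neg, norm_mul]
        exact (mul_le_of_le_one_right (norm_nonneg _) (norm_bernoulliEuler_le_one hk')).trans
          hc_pow

end Padic

section Valuation

variable {p : ℕ} [hp : Fact p.Prime]

theorem Padic.norm_ratCast_eq_zpow {x : ℚ} (hx : x ≠ 0) :
    ‖(x : ℚ_[p])‖ = (p : ℝ) ^ (-padicValRat p x) := by
  rw [Padic.eq_padicNorm, padicNorm.eq_zpow_of_nonzero hx]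
  push_cast
  rfl

theorem le_padicValRat_of_norm_le {x : ℚ} (hx : x ≠ 0) {m : ℤ}
    (h : ‖(x : ℚ_[p])‖ ≤ (p : ℝ) ^ (-m)) : m ≤ padicValRat p x := by
  rwa [Padic.norm_ratCast_eq_zpow hx, zpow_le_zpow_iff_right₀ (by exact_mod_cast hp.out.one_lt),
    neg_le_neg_iff] at h

theorem pow_padicValRat_toNat_modEq {x y : ℚ} (hx : x ≠ 0) (hy : y ≠ 0) {n : ℕ}
    (hxy : ‖(x : ℚ_[p]) - y‖ ≤ (p : ℝ) ^ (-n : ℤ)) :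
    (p : ℤ) ^ (padicValRat p x).toNat ≡ (p : ℤ) ^ (padicValRat p y).toNat [ZMOD (p : ℤ) ^ n] := by
  by_cases hnorm : ‖(x : ℚ_[p])‖ = ‖(y : ℚ_[p])‖
  · rw [Padic.norm_ratCast_eq_zpow hx, Padic.norm_ratCast_eq_zpow hy] at hnorm
    rw [neg_injective (zpow_right_injective₀ (by exact_mod_cast hp.out.pos)
      (by exact_mod_cast hp.out.ne_one) hnorm)]
  · rw [sub_eq_add_neg, Padic.add_eq_max_of_ne (by rwa [norm_neg]), norm_neg] at hxy
    have hvx := le_padicValRat_of_norm_le hx ((le_max_left _ _).trans hxy)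
    have hvy := le_padicValRat_of_norm_le hy ((le_max_right _ _).trans hxy)
    exact (Int.modEq_zero_iff_dvd.2 (pow_dvd_pow _ (by omega))).trans
      (Int.modEq_zero_iff_dvd.2 (pow_dvd_pow _ (by omega))).symm

end Valuation

theorem bernoulli_ne_zero_of_even {k : ℕ} (hk : Even k) (hk0 : k ≠ 0) : bernoulli k ≠ 0 := by
  obtain ⟨m, rfl⟩ := hk
  intro h0
  have hs := hasSum_zeta_nat (k := m) (by omega)
  rw [← two_mul] at h0
  rw [h0] at hs
  simp only [Rat.cast_zero, mul_zero, zero_div] at hs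
  have h1 := le_hasSum hs 1 fun i _ => by positivity
  norm_num at h1

theorem bernoulliEuler_eq_zero_of_odd (p : ℕ) {k : ℕ} (hk : Odd k) : bernoulliEuler p k = 0 := by
  rcases eq_or_ne k 1 with rfl | hk1
  · simp [bernoulliEuler]
  · simp [bernoulliEuler, bernoulli_eq_zero_of_odd hk (by grind)]

theorem bernoulliEuler_ne_zero_of_even {p k : ℕ} (hp : 1 < p) (hk : Even k) (hk0 : k ≠ 0) :
    bernoulliEuler p k ≠ 0 := by
  have hfactor : (1 : ℚ) - (p : ℚ) ^ (k - 1) ≠ 0 :=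
    sub_ne_zero.2 (one_lt_pow₀ (by exact_mod_cast hp) (by grind)).ne
  exact mul_ne_zero hfactor
    (div_ne_zero (bernoulli_ne_zero_of_even hk hk0) (by exact_mod_cast hk0))

/-- ℓ-part of the Kummer congruences (Theorem 2): for an odd prime
`ℓ`, `(ℓ-1) ∤ k`, `(ℓ-1) ∤ k'` and `k ≡ k' (mod (ℓ-1)ℓ^{n-1})`, the `ℓ`-parts
`ℓ^{v_ℓ(·)}` of `(1-ℓ^{k-1})B_k/k` and `(1-ℓ^{k'-1})B_{k'}/k'` are congruent
modulo `ℓ^n`. -/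
theorem stmt12 (ℓ : ℕ) (hℓ : ℓ.Prime) (hodd : Odd ℓ) (n : ℕ) (hn : 1 ≤ n)
    (k k' : ℕ) (hk : 0 < k) (hk' : 0 < k')
    (hndvd : ¬ ((ℓ - 1) ∣ k)) (hndvd' : ¬ ((ℓ - 1) ∣ k'))
    (hcong : k ≡ k' [MOD (ℓ - 1) * ℓ ^ (n - 1)]) :
    (ℓ : ℤ) ^ ((padicValRat ℓ ((1 - (ℓ : ℚ) ^ (k - 1)) * (bernoulli k / (k : ℚ)))).toNat) ≡
      (ℓ : ℤ) ^ ((padicValRat ℓ ((1 - (ℓ : ℚ) ^ (k' - 1)) * (bernoulli k' / (k' : ℚ)))).toNat)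
        [ZMOD (ℓ : ℤ) ^ n] := by
  have := Fact.mk hℓ
  have hparity : k % 2 = k' % 2 :=
    hcong.of_dvd (dvd_mul_of_dvd_left (Nat.Odd.sub_odd hodd odd_one).two_dvd _)
  change (ℓ : ℤ) ^ (padicValRat ℓ (bernoulliEuler ℓ k)).toNat ≡
    (ℓ : ℤ) ^ (padicValRat ℓ (bernoulliEuler ℓ k')).toNat [ZMOD (ℓ : ℤ) ^ n]
  rcases Nat.even_or_odd k with heven | hodd_k
  · have heven' : Even k' := Nat.even_iff.2 (hparity ▸ Nat.even_iff.1 heven)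
    exact pow_padicValRat_toNat_modEq (bernoulliEuler_ne_zero_of_even hℓ.one_lt heven hk.ne')
      (bernoulliEuler_ne_zero_of_even hℓ.one_lt heven' hk'.ne')
      (norm_bernoulliEuler_sub_le hn hndvd hndvd' hcong)
  · have hodd_k' : Odd k' := Nat.odd_iff.2 (hparity ▸ Nat.odd_iff.1 hodd_k)
    rw [bernoulliEuler_eq_zero_of_odd ℓ hodd_k, bernoulliEuler_eq_zero_of_odd ℓ hodd_k']
end
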